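/- arXiv:1110.2841 — 2 statements merged into one kernel-verified Lean document; each statement's English description precedes it below -/
import Mathlib

section
/- Let G be a finite simple graph, let (v, w) be an edge of G, and suppose N(v) \ {w} ⊆ N(w). Then γ(G) ≤ γ(G − w) and i(G) ≤ i(G − w). -/
/-- `A` is a dominating set: every vertex outside `A` has a neighbor in `A`. -/
def IsDominatingSet {V : Type} (G : SimpleGraph V) (A : Set V) : Prop :=
  ∀ v ∉ A, ∃ a ∈ A, G.Adj v a

/-- A set of vertices is independent if no two of its vertices are adjacent. -/
def IsIndepSet {V : Type} (G : SimpleGraph V) (A : Set V) : Prop :=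
  ∀ u ∈ A, ∀ v ∈ A, ¬ G.Adj u v

/-- `γ(G)`: the minimum size of a dominating set. -/
noncomputable def domNum {V : Type} (G : SimpleGraph V) : ℕ :=
  sInf {n | ∃ A : Set V, IsDominatingSet G A ∧ A.ncard = n}

/-- `i(G)`: the minimum size of an independent dominating set. -/
noncomputable def indDomNum {V : Type} (G : SimpleGraph V) : ℕ :=
  sInf {n | ∃ A : Set V, IsDominatingSet G A ∧ IsIndepSet G A ∧ A.ncard = n}

/-- `γ₀(X, G)`: the minimum size of a set `A` with `X ⊆ N(A)`. -/
noncomputable def gamma0Of {V : Type} (G : SimpleGraph V) (X : Set V) : ℕ :=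
  sInf {n | ∃ A : Set V, (∀ x ∈ X, ∃ a ∈ A, G.Adj x a) ∧ A.ncard = n}

/-- `γ₀(G) = γ₀(V(G), G)`. -/
noncomputable def gamma0 {V : Type} (G : SimpleGraph V) : ℕ :=
  gamma0Of G Set.univ

/-- `τ(G)`: the maximum of `γ₀(A, G)` over independent sets `A`. -/
noncomputable def tauNum {V : Type} (G : SimpleGraph V) : ℕ :=
  sSup {n | ∃ A : Set V, IsIndepSet G A ∧ gamma0Of G A = n}

/-- A set `F` of edges of `G` is edgewise dominant if every vertex of `G` is adjacent
to an endpoint of some edge in `F`. -/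
def IsEdgewiseDominant {V : Type} (G : SimpleGraph V) (F : Set (Sym2 V)) : Prop :=
  F ⊆ G.edgeSet ∧ ∀ v : V, ∃ e ∈ F, ∃ w, w ∈ e ∧ G.Adj v w

/-- `ε(G)`: the minimum size of an edgewise dominant set of edges. -/
noncomputable def epsilonNum {V : Type} (G : SimpleGraph V) : ℕ :=
  sInf {n | ∃ F : Set (Sym2 V), IsEdgewiseDominant G F ∧ F.ncard = n}

/-
A dominating set of `G - w` already dominates `G` except possibly at `w`, and `w` is dominated
by `v` if `v` is in the set and otherwise by the neighbor of `v` that dominates it, since that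
neighbor lies in `N(v) \ {w} ⊆ N(w)`. Independence survives the passage to `G` because `G - w`
is an induced subgraph, and maximal independent sets (Zorn) are dominating, so both minima are
taken over nonempty sets.
-/

section

variable {V : Type} {G : SimpleGraph V}

lemma isIndepSet_sUnion_of_isChain {c : Set (Set V)} (hc : IsChain (· ⊆ ·) c)
    (h : ∀ s ∈ c, IsIndepSet G s) : IsIndepSet G (⋃₀ c) := by
  rintro x ⟨s, hs, hxs⟩ y ⟨t, ht, hyt⟩
  rcases hc.total hs ht with hst | hts
  · exact h t ht x (hst hxs) y hyt
  · exact h s hs x hxs y (hts hyt)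

lemma IsIndepSet.insert {A : Set V} {u : V} (hA : IsIndepSet G A) (hu : ∀ a ∈ A, ¬ G.Adj u a) :
    IsIndepSet G (insert u A) := by
  rintro x (rfl | hx) y (rfl | hy)
  · exact G.irrefl
  · exact hu y hy
  · exact fun hxy => hu x hx hxy.symm
  · exact hA x hx y hy

variable (G) in
lemma exists_isDominatingSet_isIndepSet : ∃ A : Set V, IsDominatingSet G A ∧ IsIndepSet G A := by
  obtain ⟨A, hA⟩ := zorn_subset {A | IsIndepSet G A} fun c hcS hc =>
    ⟨⋃₀ c, isIndepSet_sUnion_of_isChain hc hcS, fun _ => Set.subset_sUnion_of_mem⟩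
  refine ⟨A, fun u hu => ?_, hA.prop⟩
  by_contra! hundom
  exact hu (hA.mem_of_prop_insert (hA.prop.insert hundom))

lemma IsIndepSet.image_val {s : Set V} {A : Set s} (hA : IsIndepSet (G.induce s) A) :
    IsIndepSet G (Subtype.val '' A) := by
  rintro _ ⟨x, hx, rfl⟩ _ ⟨y, hy, rfl⟩
  exact hA x hx y hy

lemma IsDominatingSet.image_val_of_neighborSet_sdiff_subset {v w : V} (hvw : G.Adj v w)
    (hsub : G.neighborSet v \ {w} ⊆ G.neighborSet w) {A : Set ({w}ᶜ : Set V)}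
    (hA : IsDominatingSet (G.induce {w}ᶜ) A) : IsDominatingSet G (Subtype.val '' A) := by
  intro u hu
  by_cases huw : u = w
  · subst huw
    let v' : ({u}ᶜ : Set V) := ⟨v, hvw.ne⟩
    by_cases hvA : v' ∈ A
    · exact ⟨v, ⟨v', hvA, rfl⟩, hvw.symm⟩
    · obtain ⟨a, haA, hva⟩ := hA v' hvA
      exact ⟨a, ⟨a, haA, rfl⟩, hsub ⟨hva, a.2⟩⟩
  · obtain ⟨a, haA, hua⟩ := hA ⟨u, huw⟩ fun h => hu ⟨_, h, rfl⟩
    exact ⟨a, ⟨a, haA, rfl⟩, hua⟩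

end

theorem stmt17_general {V : Type} (G : SimpleGraph V) (v w : V) (hvw : G.Adj v w)
    (hsub : G.neighborSet v \ {w} ⊆ G.neighborSet w) :
    domNum G ≤ domNum (G.induce ({w}ᶜ : Set V)) ∧
      indDomNum G ≤ indDomNum (G.induce ({w}ᶜ : Set V)) := by
  obtain ⟨A₀, hA₀dom, hA₀ind⟩ := exists_isDominatingSet_isIndepSet (G.induce ({w}ᶜ : Set V))
  constructor
  · refine csInf_le_csInf' ⟨_, A₀, hA₀dom, rfl⟩ ?_
    rintro _ ⟨A, hA, rfl⟩
    exact ⟨_, hA.image_val_of_neighborSet_sdiff_subset hvw hsub,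
      Set.ncard_image_of_injective A Subtype.val_injective⟩
  · refine csInf_le_csInf' ⟨_, A₀, hA₀dom, hA₀ind, rfl⟩ ?_
    rintro _ ⟨A, hAdom, hAind, rfl⟩
    exact ⟨_, hAdom.image_val_of_neighborSet_sdiff_subset hvw hsub, hAind.image_val,
      Set.ncard_image_of_injective A Subtype.val_injective⟩

theorem stmt17 {V : Type} [Fintype V] (G : SimpleGraph V) (v w : V) (hvw : G.Adj v w)
    (hsub : G.neighborSet v \ {w} ⊆ G.neighborSet w) :
    domNum G ≤ domNum (G.induce ({w}ᶜ : Set V)) ∧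
      indDomNum G ≤ indDomNum (G.induce ({w}ᶜ : Set V)) :=
  stmt17_general G v w hvw hsub
end

section
/- Let G be a long finite simple graph, i.e., a graph in which the set {x ∈ V(G) : deg(x) > 2} is independent. Then i(G) = γ(G). -/
namespace SimpleGraph

variable {V : Type} {G : SimpleGraph V}

def adjPairsIn (G : SimpleGraph V) (A : Set V) : Set (V × V) :=
  {p | p.1 ∈ A ∧ p.2 ∈ A ∧ G.Adj p.1 p.2}

lemma adjPairsIn_insert_of_forall_not_adj {A : Set V} {w : V} (hw : ∀ a ∈ A, ¬ G.Adj w a) :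
    G.adjPairsIn (insert w A) = G.adjPairsIn A := by
  ext ⟨a, b⟩
  simp only [adjPairsIn, Set.mem_ofPred_eq, Set.mem_insert_iff]
  constructor
  · rintro ⟨rfl | ha, rfl | hb, hab⟩
    · exact (G.loopless.irrefl _ hab).elim
    · exact (hw b hb hab).elim
    · exact (hw a ha hab.symm).elim
    · exact ⟨ha, hb, hab⟩
  · rintro ⟨ha, hb, hab⟩
    exact ⟨Or.inr ha, Or.inr hb, hab⟩

lemma adjPairsIn_diff_singleton_ssubset {D : Set V} {u v : V} (hu : u ∈ D) (hv : v ∈ D)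
    (huv : G.Adj u v) : G.adjPairsIn (D \ {u}) ⊂ G.adjPairsIn D :=
  ⟨fun _ ⟨ha, hb, hab⟩ => ⟨ha.1, hb.1, hab⟩,
    fun h => (h (show (u, v) ∈ G.adjPairsIn D from ⟨hu, hv, huv⟩)).1.2 rfl⟩

lemma eq_or_eq_of_ncard_neighborSet_le_two [Finite V] {u v w x : V}
    (hdeg : (G.neighborSet u).ncard ≤ 2) (hv : G.Adj u v) (hw : G.Adj u w) (hvw : v ≠ w)
    (hx : G.Adj u x) : x = v ∨ x = w := by
  have hN : ({v, w} : Set V) = G.neighborSet u :=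
    Set.eq_of_subset_of_ncard_le (by simp [Set.insert_subset_iff, hv, hw])
      (by rwa [Set.ncard_pair hvw])
  exact hN.symm.subset hx

end SimpleGraph

variable {V : Type} {G : SimpleGraph V}

lemma IsDominatingSet.union_diff_singleton {D W : Set V} {u v : V} (hD : IsDominatingSet G D)
    (hv : v ∈ D) (huv : G.Adj u v)
    (hW : ∀ x ∉ D, G.Adj x u → (∀ a ∈ D, G.Adj x a → a = u) → x ∈ W) :
    IsDominatingSet G (W ∪ (D \ {u})) := by
  intro x hx
  simp only [Set.mem_union, Set.mem_sdiff, Set.mem_singleton_iff, not_or, not_and_not_right]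
    at hx
  obtain ⟨hxW, hxD⟩ := hx
  by_cases hxu : x = u
  · exact ⟨v, Or.inr ⟨hv, huv.ne'⟩, hxu ▸ huv⟩
  have hxD : x ∉ D := fun h => hxu (hxD h)
  by_cases hpriv : ∀ a ∈ D, G.Adj x a → a = u
  · obtain ⟨a, haD, hxa⟩ := hD x hxD
    exact (hxW (hW x hxD (hpriv a haD hxa ▸ hxa) hpriv)).elim
  push Not at hpriv
  obtain ⟨a, haD, hxa, hau⟩ := hpriv
  exact ⟨a, Or.inr ⟨haD, hau⟩, hxa⟩

lemma IsDominatingSet.two_lt_ncard_neighborSet [Finite V] {D : Set V}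
    (hD : IsDominatingSet G D)
    (hmin : ∀ A, IsDominatingSet G A →
      toLex (D.ncard, (G.adjPairsIn D).ncard) ≤ toLex (A.ncard, (G.adjPairsIn A).ncard))
    {u v : V} (hu : u ∈ D) (hv : v ∈ D) (huv : G.Adj u v) :
    2 < (G.neighborSet u).ncard := by
  by_contra! hdeg
  by_cases hpriv : ∀ x ∉ D, G.Adj x u → ¬ ∀ a ∈ D, G.Adj x a → a = u
  · have hdom : IsDominatingSet G (D \ {u}) := by
      simpa using hD.union_diff_singleton (W := ∅) hv huv fun x hx hxu h => hpriv x hx hxu h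
    have hlt : (D \ {u}).ncard < D.ncard := Set.ncard_sdiff_singleton_lt_of_mem hu
    have := Prod.Lex.toLex_le_toLex.1 (hmin _ hdom)
    omega
  push Not at hpriv
  obtain ⟨w, hwD, hwu, hwpriv⟩ := hpriv
  have hdom : IsDominatingSet G (insert w (D \ {u})) := by
    rw [← Set.singleton_union]
    refine hD.union_diff_singleton hv huv fun x hxD hxu _ => ?_
    have := G.eq_or_eq_of_ncard_neighborSet_le_two hdeg huv hwu.symm
      (fun h => hwD (h ▸ hv)) hxu.symm
    exact this.resolve_left fun h => hxD (h ▸ hv)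
  have hcard : (insert w (D \ {u})).ncard = D.ncard := by
    rw [Set.ncard_insert_of_notMem fun h => hwD h.1, Set.ncard_sdiff_singleton_add_one hu]
  have hpairs : (G.adjPairsIn (insert w (D \ {u}))).ncard < (G.adjPairsIn D).ncard := by
    rw [SimpleGraph.adjPairsIn_insert_of_forall_not_adj fun a ha hwa => ha.2 (hwpriv a ha.1 hwa)]
    exact Set.ncard_lt_ncard (SimpleGraph.adjPairsIn_diff_singleton_ssubset hu hv huv)
  have := Prod.Lex.toLex_le_toLex.1 (hmin _ hdom)
  omega

lemma exists_isDominatingSet_forall_le [Finite V] (G : SimpleGraph V) :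
    ∃ D, IsDominatingSet G D ∧ ∀ A, IsDominatingSet G A →
      toLex (D.ncard, (G.adjPairsIn D).ncard) ≤ toLex (A.ncard, (G.adjPairsIn A).ncard) :=
  Set.exists_min_image {A | IsDominatingSet G A} _ (Set.toFinite _)
    ⟨Set.univ, fun _ hv => (hv trivial).elim⟩

lemma indDomNum_eq_domNum_of_isIndepSet {D : Set V} (hD : IsDominatingSet G D)
    (hind : IsIndepSet G D) (hmin : ∀ A, IsDominatingSet G A → D.ncard ≤ A.ncard) :
    indDomNum G = domNum G := by
  obtain ⟨A, hA, -, hAcard⟩ := Nat.sInf_mem (⟨_, D, hD, hind, rfl⟩ :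
    {n | ∃ A : Set V, IsDominatingSet G A ∧ IsIndepSet G A ∧ A.ncard = n}.Nonempty)
  refine le_antisymm ?_ ?_
  · calc indDomNum G ≤ D.ncard := Nat.sInf_le ⟨D, hD, hind, rfl⟩
      _ ≤ domNum G := le_csInf ⟨_, D, hD, rfl⟩ fun _ ⟨A, hA, hn⟩ => hn ▸ hmin A hA
  · rw [indDomNum, ← hAcard]
    exact Nat.sInf_le ⟨A, hA, rfl⟩

/-- For a long graph (the vertices of degree greater than 2 form an independent set),
the independent domination number equals the domination number. -/
theorem stmt19 {V : Type} [Fintype V] (G : SimpleGraph V)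
    (hlong : IsIndepSet G {x : V | 2 < (G.neighborSet x).ncard}) :
    indDomNum G = domNum G := by
  obtain ⟨D, hD, hmin⟩ := exists_isDominatingSet_forall_le G
  have hind : IsIndepSet G D := fun u hu v hv huv =>
    hlong u (hD.two_lt_ncard_neighborSet hmin hu hv huv)
      v (hD.two_lt_ncard_neighborSet hmin hv hu huv.symm) huv
  refine indDomNum_eq_domNum_of_isIndepSet hD hind fun A hA => ?_
  have := Prod.Lex.toLex_le_toLex.1 (hmin A hA)
  omega
end
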